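/- arXiv:2003.10522 — 7 statements merged into one kernel-verified Lean document; each statement's English description precedes it below -/
import Mathlib

section
/- The block matrix 𝒜 = [[A, Bᵀ, 0], [B, 0, Cᵀ], [0, C, 0]] is nonsingular, when A ∈ ℝ^{n×n} is symmetric positive definite, B ∈ ℝ^{m×n} has full row rank, and C ∈ ℝ^{l×m} has full row rank. -/
open Matrix

noncomputable section

/-- 3×3 block matrix with blocks of sizes n, m, l. -/
def blk3 {n m l : ℕ} (M11 : Matrix (Fin n) (Fin n) ℝ) (M12 : Matrix (Fin n) (Fin m) ℝ)
    (M13 : Matrix (Fin n) (Fin l) ℝ) (M21 : Matrix (Fin m) (Fin n) ℝ)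
    (M22 : Matrix (Fin m) (Fin m) ℝ) (M23 : Matrix (Fin m) (Fin l) ℝ)
    (M31 : Matrix (Fin l) (Fin n) ℝ) (M32 : Matrix (Fin l) (Fin m) ℝ)
    (M33 : Matrix (Fin l) (Fin l) ℝ) :
    Matrix (Fin n ⊕ (Fin m ⊕ Fin l)) (Fin n ⊕ (Fin m ⊕ Fin l)) ℝ :=
  fromBlocks M11 (fromCols M12 M13) (fromRows M21 M31) (fromBlocks M22 M23 M32 M33)

/-- μ ∈ ℂ is an eigenvalue of the real matrix M (viewed over ℂ). -/
def IsEig {k : Type*} [Fintype k] (M : Matrix k k ℝ) (μ : ℂ) : Prop :=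
  ∃ v : k → ℂ, v ≠ 0 ∧ (M.map (fun x : ℝ => (x : ℂ))) *ᵥ v = μ • v

/-! If `𝒜 (x, y, z) = 0` then `Ax + Bᵀy = 0`, `Bx + Cᵀz = 0` and `Cy = 0`, hence
`xᵀAx = -(Bx)ᵀy = (Cᵀz)ᵀy = zᵀ(Cy) = 0`. Positive definiteness gives `x = 0`; then
`Bᵀy = 0` and `Cᵀz = 0`, and full row rank of `B` and `C` makes `Bᵀ` and `Cᵀ` injective,
so `y = z = 0`. -/

theorem Matrix.mulVec_injective_of_rank_eq_card {K m n : Type*} [Field K] [Fintype n]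
    (M : Matrix m n K) (h : M.rank = Fintype.card n) : Function.Injective M.mulVec := by
  have rank_nullity := M.mulVecLin.finrank_range_add_finrank_ker
  rw [Module.finrank_fintype_fun_eq_card, ← rank, h, add_eq_left,
    Submodule.finrank_eq_zero, LinearMap.ker_eq_bot] at rank_nullity
  exact rank_nullity

theorem blk3_mulVec_sumElim {n m l : ℕ} (M11 : Matrix (Fin n) (Fin n) ℝ)
    (M12 : Matrix (Fin n) (Fin m) ℝ) (M13 : Matrix (Fin n) (Fin l) ℝ)
    (M21 : Matrix (Fin m) (Fin n) ℝ) (M22 : Matrix (Fin m) (Fin m) ℝ)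
    (M23 : Matrix (Fin m) (Fin l) ℝ) (M31 : Matrix (Fin l) (Fin n) ℝ)
    (M32 : Matrix (Fin l) (Fin m) ℝ) (M33 : Matrix (Fin l) (Fin l) ℝ)
    (x : Fin n → ℝ) (y : Fin m → ℝ) (z : Fin l → ℝ) :
    blk3 M11 M12 M13 M21 M22 M23 M31 M32 M33 *ᵥ Sum.elim x (Sum.elim y z) =
      Sum.elim (M11 *ᵥ x + M12 *ᵥ y + M13 *ᵥ z)
        (Sum.elim (M21 *ᵥ x + M22 *ᵥ y + M23 *ᵥ z) (M31 *ᵥ x + M32 *ᵥ y + M33 *ᵥ z)) := by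
  simp only [blk3, fromBlocks_mulVec, fromCols_mulVec_sumElim, fromRows_mulVec, add_assoc,
    Sum.elim_comp_inl, Sum.elim_comp_inr, Sum.elim_add_add]

section DoubleSaddlePoint

variable {n m l : Type*} [Fintype n] [Fintype m] [Fintype l]
  {A : Matrix n n ℝ} {B : Matrix m n ℝ} {C : Matrix l m ℝ}
  {x : n → ℝ} {y : m → ℝ} {z : l → ℝ}

theorem dotProduct_mulVec_self_eq_zero_of_doubleSaddlePoint (h₁ : A *ᵥ x + Bᵀ *ᵥ y = 0)
    (h₂ : B *ᵥ x + Cᵀ *ᵥ z = 0) (h₃ : C *ᵥ y = 0) : x ⬝ᵥ A *ᵥ x = 0 :=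
  calc x ⬝ᵥ A *ᵥ x = -(x ⬝ᵥ Bᵀ *ᵥ y) := by
        rw [eq_neg_iff_add_eq_zero, ← dotProduct_add, h₁, dotProduct_zero]
    _ = -((B *ᵥ x) ⬝ᵥ y) := by rw [dotProduct_mulVec, vecMul_transpose]
    _ = (Cᵀ *ᵥ z) ⬝ᵥ y := by rw [eq_neg_of_add_eq_zero_left h₂, neg_dotProduct, neg_neg]
    _ = 0 := by rw [dotProduct_comm, dotProduct_mulVec, vecMul_transpose, h₃, zero_dotProduct]

theorem eq_zero_of_doubleSaddlePoint (hA : A.PosDef) (hB : Function.Injective Bᵀ.mulVec)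
    (hC : Function.Injective Cᵀ.mulVec) (h₁ : A *ᵥ x + Bᵀ *ᵥ y = 0)
    (h₂ : B *ᵥ x + Cᵀ *ᵥ z = 0) (h₃ : C *ᵥ y = 0) : x = 0 ∧ y = 0 ∧ z = 0 := by
  have hx : x = 0 := by
    by_contra hx
    simpa [dotProduct_mulVec_self_eq_zero_of_doubleSaddlePoint h₁ h₂ h₃] using hA.dotProduct_mulVec_pos hx
  subst hx
  rw [mulVec_zero, zero_add] at h₁ h₂
  exact ⟨rfl, hB (h₁.trans (mulVec_zero _).symm), hC (h₂.trans (mulVec_zero _).symm)⟩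

end DoubleSaddlePoint

theorem stmt0 {n m l : ℕ} (A : Matrix (Fin n) (Fin n) ℝ) (B : Matrix (Fin m) (Fin n) ℝ)
    (C : Matrix (Fin l) (Fin m) ℝ) (hA : A.PosDef) (hB : B.rank = m) (hC : C.rank = l) :
    IsUnit (blk3 A Bᵀ 0 B 0 Cᵀ 0 C 0) := by
  have hBt : Function.Injective Bᵀ.mulVec :=
    Bᵀ.mulVec_injective_of_rank_eq_card (by rw [rank_transpose, hB, Fintype.card_fin])
  have hCt : Function.Injective Cᵀ.mulVec :=
    Cᵀ.mulVec_injective_of_rank_eq_card (by rw [rank_transpose, hC, Fintype.card_fin])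
  refine mulVec_injective_iff_isUnit.mp <|
    (injective_iff_map_eq_zero (blk3 A Bᵀ 0 B 0 Cᵀ 0 C 0).mulVecLin).mpr fun v hv => ?_
  obtain ⟨x, y, z, rfl⟩ : ∃ x y z, v = Sum.elim x (Sum.elim y z) :=
    ⟨v ∘ Sum.inl, v ∘ Sum.inr ∘ Sum.inl, v ∘ Sum.inr ∘ Sum.inr, by
      ext (i | i | i) <;> rfl⟩
  rw [mulVecLin_apply, blk3_mulVec_sumElim, ← Sum.elim_zero_zero, ← Sum.elim_zero_zero,
    Sum.elim_eq_iff, Sum.elim_eq_iff] at hv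
  simp only [zero_mulVec, add_zero, zero_add] at hv
  obtain ⟨hx, hy, hz⟩ := eq_zero_of_doubleSaddlePoint hA hBt hCt hv.1 hv.2.1 hv.2.2
  rw [hx, hy, hz, Sum.elim_zero_zero, Sum.elim_zero_zero]
end
end

section
/- The block matrix 𝒫 = [[A, Bᵀ, 0], [0, S, -Cᵀ], [0, C, 0]] is nonsingular, when A and S are symmetric positive definite and C has full row rank. -/
open Matrix

noncomputable section

lemma transpose_mulVec_injective {m l : ℕ} (C : Matrix (Fin l) (Fin m) ℝ)
    (hC : C.rank = l) {z : Fin l → ℝ} (hz : Cᵀ *ᵥ z = 0) : z = 0 := by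
  have hrt : Cᵀ.rank = l := by rw [Matrix.rank_transpose]; exact hC
  have hker : LinearMap.ker Cᵀ.mulVecLin = ⊥ := by
    have h1 := LinearMap.finrank_range_add_finrank_ker Cᵀ.mulVecLin
    rw [← Matrix.rank] at h1
    rw [hrt] at h1
    have hcard : Module.finrank ℝ (Fin l → ℝ) = l := by simp
    rw [hcard] at h1
    have : Module.finrank ℝ (LinearMap.ker Cᵀ.mulVecLin) = 0 := by omega
    exact Submodule.finrank_eq_zero.mp this
  have : z ∈ LinearMap.ker Cᵀ.mulVecLin := by
    rw [LinearMap.mem_ker, Matrix.mulVecLin_apply]; exact hz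
  rw [hker] at this
  simpa using this

theorem stmt2 {n m l : ℕ} (A : Matrix (Fin n) (Fin n) ℝ) (B : Matrix (Fin m) (Fin n) ℝ)
    (S : Matrix (Fin m) (Fin m) ℝ) (C : Matrix (Fin l) (Fin m) ℝ)
    (hA : A.PosDef) (hS : S.PosDef) (hC : C.rank = l) :
    IsUnit (blk3 A Bᵀ 0 0 S (-Cᵀ) 0 C 0) := by
  rw [Matrix.isUnit_iff_isUnit_det, isUnit_iff_ne_zero]
  intro hdet
  obtain ⟨v, hv, hMv⟩ := (Matrix.exists_mulVec_eq_zero_iff).mpr hdet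
  set x : Fin n → ℝ := v ∘ Sum.inl with hxdef
  set y : Fin m → ℝ := v ∘ Sum.inr ∘ Sum.inl
  set z : Fin l → ℝ := v ∘ Sum.inr ∘ Sum.inr
  have hv' : v = Sum.elim x (Sum.elim y z) := by
    funext i; rcases i with i | j
    · rfl
    · rcases j with j | k <;> rfl
  rw [hv'] at hMv
  unfold blk3 at hMv
  rw [Matrix.fromBlocks_mulVec] at hMv
  simp only [Sum.elim_comp_inl, Sum.elim_comp_inr] at hMv
  rw [Matrix.fromCols_mulVec_sumElim, Matrix.fromRows_mulVec,
      Matrix.fromBlocks_mulVec] at hMv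
  -- extract component equations
  have h1 : A *ᵥ x + (Bᵀ *ᵥ y + (0 : Matrix (Fin n) (Fin l) ℝ) *ᵥ z) = 0 := by
    funext i; exact congrFun hMv (Sum.inl i)
  have h2 : S *ᵥ y + (-Cᵀ) *ᵥ z = 0 := by
    have := fun j => congrFun hMv (Sum.inr (Sum.inl j))
    funext j; simpa using this j
  have h3 : C *ᵥ y = 0 := by
    have := fun k => congrFun hMv (Sum.inr (Sum.inr k))
    funext k; simpa using this k
  -- y = 0
  have hSy : S *ᵥ y = Cᵀ *ᵥ z := by
    have := h2
    rw [Matrix.neg_mulVec] at this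
    linear_combination (norm := module) this
  have hy : y = 0 := by
    by_contra hy0
    have hpos := hS.dotProduct_mulVec_pos hy0
    have : star y ⬝ᵥ S *ᵥ y = 0 := by
      rw [show (star y : Fin m → ℝ) = y from rfl, hSy, Matrix.dotProduct_mulVec,
          Matrix.vecMul_transpose, h3, zero_dotProduct]
    rw [this] at hpos
    exact lt_irrefl 0 hpos
  -- z = 0
  have hz : z = 0 := by
    apply transpose_mulVec_injective C hC
    rw [← hSy, hy, Matrix.mulVec_zero]
  -- x = 0
  have hx : x = 0 := by
    have hAx : A *ᵥ x = 0 := by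
      have h1' := h1
      rw [hy, Matrix.mulVec_zero, Matrix.zero_mulVec, add_zero, add_zero] at h1'
      exact h1'
    by_contra hx0
    have hpos := hA.dotProduct_mulVec_pos hx0
    have : star x ⬝ᵥ A *ᵥ x = 0 := by
      rw [show (star x : Fin n → ℝ) = x from rfl, hAx, dotProduct_zero]
    rw [this] at hpos
    exact lt_irrefl 0 hpos
  apply hv
  rw [hv', hx, hy, hz]
  funext i; rcases i with i | j
  · rfl
  · rcases j with j | k <;> rfl
end
end

section
/- Let A be symmetric positive definite and B symmetric positive semidefinite, both n×n real matrices. Then A - B is positive semidefinite if and only if ρ(A⁻¹B) ≤ 1, and A - B is positive definite if and only if ρ(A⁻¹B) < 1, where ρ denotes the spectral radius. -/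
open Matrix

noncomputable section

abbrev cV {k : Type*} (v : k → ℝ) : k → ℂ := fun i => (v i : ℂ)

lemma mulVec_map_real {k : Type*} [Fintype k] (M : Matrix k k ℝ) (v : k → ℝ) :
    (M.map fun x : ℝ => (x : ℂ)) *ᵥ cV v = cV (M *ᵥ v) := by
  funext i
  exact (RingHom.map_mulVec Complex.ofRealHom M v i).symm

lemma dot_map_real {k : Type*} [Fintype k] (v w : k → ℝ) :
    cV v ⬝ᵥ cV w = ((v ⬝ᵥ w : ℝ) : ℂ) :=
  (RingHom.map_dotProduct Complex.ofRealHom v w).symm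


lemma map_real_mul {k : Type*} [Fintype k] (M N : Matrix k k ℝ) :
    ((M * N).map fun x : ℝ => (x : ℂ)) =
      (M.map fun x : ℝ => (x : ℂ)) * (N.map fun x : ℝ => (x : ℂ)) := by
  ext i j
  simp [Matrix.mul_apply]

lemma map_real_one {k : Type*} [Fintype k] [DecidableEq k] :
    ((1 : Matrix k k ℝ).map fun x : ℝ => (x : ℂ)) = 1 := by
  ext i j
  simp [Matrix.one_apply, apply_ite]

lemma quad_eq {k : Type*} [Fintype k] {M : Matrix k k ℝ} (hM : M.IsHermitian) (v : k → ℂ) :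
    star v ⬝ᵥ ((M.map fun x : ℝ => (x : ℂ)) *ᵥ v) =
      ((((fun i => (v i).re) ⬝ᵥ (M *ᵥ fun i => (v i).re))
        + ((fun i => (v i).im) ⬝ᵥ (M *ᵥ fun i => (v i).im)) : ℝ) : ℂ) := by
  set x : k → ℝ := fun i => (v i).re with hx
  set y : k → ℝ := fun i => (v i).im with hy
  have hMt : Mᵀ = M := by
    funext i j
    simpa using congrFun (congrFun hM i) j
  have hsym : ∀ a b : k → ℝ, a ⬝ᵥ (M *ᵥ b) = b ⬝ᵥ (M *ᵥ a) := by
    intro a b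
    rw [Matrix.dotProduct_mulVec, ← Matrix.mulVec_transpose, hMt, dotProduct_comm]
  have hv : v = cV x + Complex.I • cV y := by
    funext i
    simp [cV, Complex.ext_iff, hx, hy]
  have hsv : star v = cV x - Complex.I • cV y := by
    funext i
    simp [hv, cV, Complex.ext_iff]
  rw [hsv, hv, Matrix.mulVec_add, Matrix.mulVec_smul, mulVec_map_real, mulVec_map_real,
    sub_dotProduct, dotProduct_add, dotProduct_add, dotProduct_smul, smul_dotProduct,
    smul_dotProduct, dotProduct_smul, dot_map_real, dot_map_real, dot_map_real, dot_map_real,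
    hsym y x]
  simp only [smul_eq_mul]
  push_cast
  ring_nf
  rw [Complex.I_sq]
  ring

lemma quad_nonneg {k : Type*} [Fintype k] {M : Matrix k k ℝ} (hM : M.PosSemidef) (v : k → ℂ) :
    ∃ r : ℝ, 0 ≤ r ∧ star v ⬝ᵥ ((M.map fun x : ℝ => (x : ℂ)) *ᵥ v) = (r : ℂ) :=
  ⟨_, add_nonneg (by simpa using hM.dotProduct_mulVec_nonneg _) (by simpa using hM.dotProduct_mulVec_nonneg _), quad_eq hM.isHermitian v⟩

lemma re_im_ne_zero {k : Type*} {v : k → ℂ} (hv : v ≠ 0) :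
    (fun i => (v i).re) ≠ (0 : k → ℝ) ∨ (fun i => (v i).im) ≠ (0 : k → ℝ) := by
  by_contra h
  push_neg at h
  apply hv
  funext i
  have h1 := congrFun h.1 i
  have h2 := congrFun h.2 i
  simp only [Pi.zero_apply] at h1 h2 ⊢
  exact Complex.ext h1 h2

lemma quad_pos {k : Type*} [Fintype k] {M : Matrix k k ℝ} (hM : M.PosDef) {v : k → ℂ}
    (hv : v ≠ 0) :
    ∃ r : ℝ, 0 < r ∧ star v ⬝ᵥ ((M.map fun x : ℝ => (x : ℂ)) *ᵥ v) = (r : ℂ) := by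
  refine ⟨_, ?_, quad_eq hM.isHermitian v⟩
  rcases re_im_ne_zero hv with h | h
  · exact add_pos_of_pos_of_nonneg (by simpa using hM.dotProduct_mulVec_pos h) (by simpa using hM.posSemidef.dotProduct_mulVec_nonneg _)
  · exact add_pos_of_nonneg_of_pos (by simpa using hM.posSemidef.dotProduct_mulVec_nonneg _) (by simpa using hM.dotProduct_mulVec_pos h)

lemma isEig_of_real {k : Type*} [Fintype k] {M : Matrix k k ℝ} {lam : ℝ} {w : k → ℝ}
    (hw : w ≠ 0) (h : M *ᵥ w = lam • w) : IsEig M (lam : ℂ) := by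
  refine ⟨cV w, ?_, ?_⟩
  · intro h0
    apply hw
    funext i
    have := congrFun h0 i
    simpa [cV] using this
  · rw [mulVec_map_real, h]
    funext i
    simp [cV]

lemma posDef_conj {k : Type*} [Fintype k] [DecidableEq k] {M N : Matrix k k ℝ}
    (hM : M.PosDef) (hN : IsUnit N.det) : (Nᴴ * M * N).PosDef := by
  refine PosDef.of_dotProduct_mulVec_pos (Matrix.isHermitian_conjTranspose_mul_mul N hM.1) fun x hx => ?_
  have hNx : N *ᵥ x ≠ 0 := by
    intro h
    apply hx
    have hinj := Matrix.mulVec_injective_iff_isUnit.mpr ((Matrix.isUnit_iff_isUnit_det N).mpr hN)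
    exact hinj (by simpa using h)
  simpa only [star_mulVec, dotProduct_mulVec, vecMul_vecMul] using hM.dotProduct_mulVec_pos hNx
section
open scoped MatrixOrder
lemma exists_sqrt_psd {k : Type*} [Fintype k] [DecidableEq k] {A : Matrix k k ℝ}
    (hA : A.PosSemidef) : ∃ S : Matrix k k ℝ, S.PosSemidef ∧ S * S = A :=
  ⟨CFC.sqrt A, (CFC.sqrt_nonneg A).posSemidef, CFC.sqrt_mul_sqrt_self A hA.nonneg⟩
end
theorem stmt3 {n : ℕ} (A B : Matrix (Fin n) (Fin n) ℝ)
    (hA : A.PosDef) (hB : B.PosSemidef) :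
    ((A - B).PosSemidef ↔ ∀ μ : ℂ, IsEig (A⁻¹ * B) μ → ‖μ‖ ≤ 1) ∧
    ((A - B).PosDef ↔ ∀ μ : ℂ, IsEig (A⁻¹ * B) μ → ‖μ‖ < 1) := by
  classical
  have hAdet : IsUnit A.det := hA.det_pos.ne'.isUnit
  obtain ⟨S, hS, hSS⟩ := exists_sqrt_psd hA.posSemidef
  have hSdet : IsUnit S.det := by
    have hd : S.det * S.det = A.det := by rw [← Matrix.det_mul, hSS]
    exact isUnit_of_mul_isUnit_left (hd ▸ hAdet)
  have hSH : Sᴴ = S := hS.isHermitian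
  have hSiH : (S⁻¹)ᴴ = S⁻¹ := by rw [Matrix.conjTranspose_nonsing_inv, hSH]
  set C := S⁻¹ * B * S⁻¹ with hCdef
  have hC : C.PosSemidef := by
    have h := hB.conjTranspose_mul_mul_same S⁻¹
    rwa [hSiH] at h
  have h1 : S⁻¹ * S = 1 := Matrix.nonsing_inv_mul S hSdet
  have h2 : S * S⁻¹ = 1 := Matrix.mul_nonsing_inv S hSdet
  have hABC : A⁻¹ * B = S⁻¹ * C * S := by
    rw [← hSS, Matrix.mul_inv_rev, hCdef]
    simp only [Matrix.mul_assoc, h1, Matrix.mul_one]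
  have hdiff : A - B = S * (1 - C) * S := by
    rw [hCdef, Matrix.mul_sub, Matrix.sub_mul, Matrix.mul_one, hSS]
    congr 1
    simp only [← Matrix.mul_assoc, h2, Matrix.one_mul]
    rw [Matrix.mul_assoc, h1, Matrix.mul_one]
  -- the "core" computation for the forward directions
  have core : ∀ μ : ℂ, IsEig (A⁻¹ * B) μ → ∃ v : Fin n → ℂ, v ≠ 0 ∧ ∃ rA rB : ℝ,
      0 < rA ∧ 0 ≤ rB ∧ μ = ((rB / rA : ℝ) : ℂ) ∧
      star v ⬝ᵥ (((A - B).map fun x : ℝ => (x : ℂ)) *ᵥ v) = ((rA - rB : ℝ) : ℂ) := by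
    rintro μ ⟨v, hv0, hv⟩
    obtain ⟨rA, hrA, hqA⟩ := quad_pos hA hv0
    obtain ⟨rB, hrB, hqB⟩ := quad_nonneg hB v
    have hAAB : (A.map fun x : ℝ => (x : ℂ)) * ((A⁻¹ * B).map fun x : ℝ => (x : ℂ)) =
        B.map fun x : ℝ => (x : ℂ) := by
      rw [← map_real_mul, ← Matrix.mul_assoc, Matrix.mul_nonsing_inv A hAdet, Matrix.one_mul]
    have hmul : (B.map fun x : ℝ => (x : ℂ)) *ᵥ v = μ • ((A.map fun x : ℝ => (x : ℂ)) *ᵥ v) := by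
      have hstep := congrArg (fun w => (A.map fun x : ℝ => (x : ℂ)) *ᵥ w) hv
      simp only [Matrix.mulVec_mulVec, hAAB, Matrix.mulVec_smul] at hstep
      exact hstep
    have hkey : (rB : ℂ) = μ * rA := by
      rw [← hqB, hmul, dotProduct_smul, hqA, smul_eq_mul]
    have hμ : μ = ((rB / rA : ℝ) : ℂ) := by
      have hrA0 : (rA : ℂ) ≠ 0 := by exact_mod_cast hrA.ne'
      push_cast
      field_simp
      linear_combination -hkey
    refine ⟨v, hv0, rA, rB, hrA, hrB, hμ, ?_⟩
    have hmapsub : ((A - B).map fun x : ℝ => (x : ℂ)) =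
        (A.map fun x : ℝ => (x : ℂ)) - (B.map fun x : ℝ => (x : ℂ)) := by
      ext i j
      simp
    rw [hmapsub, Matrix.sub_mulVec, dotProduct_sub, hqA, hqB]
    push_cast
    ring
  -- eigenvalues of C give eigenvalues of A⁻¹ * B
  have bwd_eig : ∀ i : Fin n, IsEig (A⁻¹ * B) ((hC.isHermitian.eigenvalues i : ℝ) : ℂ) := by
    intro i
    set lam := hC.isHermitian.eigenvalues i with hlam
    set w : Fin n → ℝ := ⇑(hC.isHermitian.eigenvectorBasis i) with hwdef
    have hw : C *ᵥ w = lam • w := hC.isHermitian.mulVec_eigenvectorBasis i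
    have hw0 : w ≠ 0 := by
      have := hC.isHermitian.eigenvectorBasis.orthonormal.ne_zero i
      intro h
      apply this
      ext j
      exact congrFun h j
    have hu0 : S⁻¹ *ᵥ w ≠ 0 := by
      intro h
      apply hw0
      have hsw : S *ᵥ (S⁻¹ *ᵥ w) = w := by
        rw [Matrix.mulVec_mulVec, h2, Matrix.one_mulVec]
      rw [h, Matrix.mulVec_zero] at hsw
      exact hsw.symm
    have heig : (A⁻¹ * B) *ᵥ (S⁻¹ *ᵥ w) = lam • (S⁻¹ *ᵥ w) := by
      rw [hABC, Matrix.mulVec_mulVec]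
      have : S⁻¹ * C * S * S⁻¹ = S⁻¹ * C := by
        simp only [Matrix.mul_assoc, h2, Matrix.mul_one]
      rw [this, ← Matrix.mulVec_mulVec, hw, Matrix.mulVec_smul]
    exact isEig_of_real hu0 heig
  -- spectral decomposition of 1 - C
  set U : Matrix (Fin n) (Fin n) ℝ := ↑(hC.isHermitian.eigenvectorUnitary) with hUdef
  have hUU : U * star U = 1 := Matrix.mem_unitaryGroup_iff.mp (hC.isHermitian.eigenvectorUnitary).2
  have hUU' : star U * U = 1 :=
    Matrix.mem_unitaryGroup_iff'.mp (hC.isHermitian.eigenvectorUnitary).2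
  have hUdet : IsUnit (star U).det := IsUnit.of_mul_eq_one U.det (by
    rw [← Matrix.det_mul, hUU', Matrix.det_one])
  have h1C : 1 - C = U * (1 - Matrix.diagonal (RCLike.ofReal ∘ hC.isHermitian.eigenvalues))
      * star U := by
    rw [Matrix.mul_sub, Matrix.sub_mul, Matrix.mul_one, hUU, hUdef, ← Unitary.conjStarAlgAut_apply (S := ℝ), ← hC.isHermitian.spectral_theorem]
  have hdiag : ∀ i, (RCLike.ofReal ∘ hC.isHermitian.eigenvalues) i = hC.isHermitian.eigenvalues i := by
    intro i; simp [RCLike.ofReal]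
  constructor
  · constructor
    · intro hAB μ hμ
      obtain ⟨v, hv0, rA, rB, hrA, hrB, hμeq, hquad⟩ := core μ hμ
      obtain ⟨r, hr, hq⟩ := quad_nonneg hAB v
      rw [hq] at hquad
      have : r = rA - rB := by exact_mod_cast hquad
      have hle : rB ≤ rA := by linarith
      rw [hμeq, Complex.norm_real]
      rw [Real.norm_eq_abs, abs_of_nonneg (div_nonneg hrB hrA.le)]
      exact div_le_one_of_le₀ hle hrA.le
    · intro h
      have heigle : ∀ i, hC.isHermitian.eigenvalues i ≤ 1 := by
        intro i
        have := h _ (bwd_eig i)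
        rw [Complex.norm_real, Real.norm_eq_abs] at this
        exact (abs_le.mp this).2
      have hdiagPSD : ((1 : Matrix (Fin n) (Fin n) ℝ) - Matrix.diagonal (RCLike.ofReal ∘ hC.isHermitian.eigenvalues)).PosSemidef := by
        have : (1 : Matrix (Fin n) (Fin n) ℝ) - Matrix.diagonal (RCLike.ofReal ∘ hC.isHermitian.eigenvalues)
            = Matrix.diagonal (fun i => 1 - hC.isHermitian.eigenvalues i) := by
          rw [← Matrix.diagonal_one, Matrix.diagonal_sub]
          congr 1
        rw [this]
        exact Matrix.posSemidef_diagonal_iff.mpr fun i => by linarith [heigle i]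
      have h1CP : (1 - C).PosSemidef := by
        rw [h1C, Matrix.star_eq_conjTranspose]
        exact hdiagPSD.mul_mul_conjTranspose_same U
      have := h1CP.conjTranspose_mul_mul_same S
      rwa [hSH, ← hdiff] at this
  · constructor
    · intro hAB μ hμ
      obtain ⟨v, hv0, rA, rB, hrA, hrB, hμeq, hquad⟩ := core μ hμ
      obtain ⟨r, hr, hq⟩ := quad_pos hAB hv0
      rw [hq] at hquad
      have : r = rA - rB := by exact_mod_cast hquad
      have hlt : rB < rA := by linarith
      rw [hμeq, Complex.norm_real]
      rw [Real.norm_eq_abs, abs_of_nonneg (div_nonneg hrB hrA.le)]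
      exact (div_lt_one hrA).mpr hlt
    · intro h
      have heiglt : ∀ i, hC.isHermitian.eigenvalues i < 1 := by
        intro i
        have := h _ (bwd_eig i)
        rw [Complex.norm_real, Real.norm_eq_abs] at this
        exact (abs_lt.mp this).2
      have hdiagPD : ((1 : Matrix (Fin n) (Fin n) ℝ) - Matrix.diagonal (RCLike.ofReal ∘ hC.isHermitian.eigenvalues)).PosDef := by
        have : (1 : Matrix (Fin n) (Fin n) ℝ) - Matrix.diagonal (RCLike.ofReal ∘ hC.isHermitian.eigenvalues)
            = Matrix.diagonal (fun i => 1 - hC.isHermitian.eigenvalues i) := by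
          rw [← Matrix.diagonal_one, Matrix.diagonal_sub]
          congr 1
        rw [this]
        exact Matrix.posDef_diagonal_iff.mpr fun i => by linarith [heiglt i]
      have h1CP : (1 - C).PosDef := by
        have := posDef_conj hdiagPD hUdet
        rwa [← Matrix.star_eq_conjTranspose, star_star, ← h1C] at this
      have := posDef_conj h1CP hSdet
      rwa [hSH, ← hdiff] at this
end
end

section
/- Let A ∈ ℝ^{n×n} be symmetric positive definite, S ∈ ℝ^{m×m} symmetric positive definite, B ∈ ℝ^{m×n} and C ∈ ℝ^{l×m} of full row rank, and suppose 2S - B A⁻¹ Bᵀ is positive definite. Then every eigenvalue λ of 𝒢 = 𝒫⁻¹ℛ, where 𝒫 = [[A, Bᵀ, 0],[0, S, -Cᵀ],[0, C, 0]] and ℛ = [[0,0,0],[B, S, 0],[0,0,0]], satisfies |λ| < 1; i.e., ρ(𝒢) < 1. -/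
open Matrix

noncomputable section

/- ### Auxiliary lemmas -/

lemma fullrank_inj {p q : ℕ} (M : Matrix (Fin p) (Fin q) ℝ) (h : M.rank = q)
    {w : Fin q → ℝ} (hw : M *ᵥ w = 0) : w = 0 := by
  have h1 := LinearMap.finrank_range_add_finrank_ker M.mulVecLin
  rw [show Module.finrank ℝ (LinearMap.range M.mulVecLin) = M.rank from rfl, h] at h1
  simp [Module.finrank_fin_fun] at h1
  have h2 : LinearMap.ker M.mulVecLin = ⊥ := h1
  have : w ∈ LinearMap.ker M.mulVecLin := by simpa [mulVecLin] using hw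
  simpa [h2] using this

lemma re_mulVec {p q : ℕ} (M : Matrix (Fin p) (Fin q) ℝ) (w : Fin q → ℂ) (i : Fin p) :
    (((M.map (fun x : ℝ => (x : ℂ))) *ᵥ w) i).re = (M *ᵥ fun j => (w j).re) i := by
  simp [mulVec, dotProduct, Complex.re_sum]

lemma im_mulVec {p q : ℕ} (M : Matrix (Fin p) (Fin q) ℝ) (w : Fin q → ℂ) (i : Fin p) :
    (((M.map (fun x : ℝ => (x : ℂ))) *ᵥ w) i).im = (M *ᵥ fun j => (w j).im) i := by
  simp [mulVec, dotProduct, Complex.im_sum]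

lemma quad_map_eq {k : ℕ} (M : Matrix (Fin k) (Fin k) ℝ) (hM : Mᵀ = M) (w : Fin k → ℂ) :
    star w ⬝ᵥ ((M.map (fun x : ℝ => (x : ℂ))) *ᵥ w) =
      ((((fun i => (w i).re) ⬝ᵥ (M *ᵥ fun i => (w i).re)
        + (fun i => (w i).im) ⬝ᵥ (M *ᵥ fun i => (w i).im)) : ℝ) : ℂ) := by
  have key : (fun i => (w i).re) ⬝ᵥ (M *ᵥ fun i => (w i).im)
      = (fun i => (w i).im) ⬝ᵥ (M *ᵥ fun i => (w i).re) := by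
    rw [dotProduct_mulVec, ← mulVec_transpose, hM, dotProduct_comm]
  apply Complex.ext
  · rw [dotProduct, Complex.re_sum]
    simp only [Pi.star_apply, Complex.star_def, Complex.mul_re, Complex.conj_re, Complex.conj_im,
      re_mulVec, im_mulVec, Complex.ofReal_re]
    rw [dotProduct, dotProduct, ← Finset.sum_add_distrib]
    congr 1; funext i; ring
  · rw [dotProduct, Complex.im_sum]
    simp only [Pi.star_apply, Complex.star_def, Complex.mul_im, Complex.conj_re, Complex.conj_im,
      re_mulVec, im_mulVec, Complex.ofReal_im]
    have : ∀ i, (w i).re * (M *ᵥ fun j => (w j).im) i + -(w i).im * (M *ᵥ fun j => (w j).re) i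
        = (w i).re * (M *ᵥ fun j => (w j).im) i - (w i).im * (M *ᵥ fun j => (w j).re) i := by
      intro i; ring
    rw [Finset.sum_congr rfl (fun i _ => this i), Finset.sum_sub_distrib]
    have := key
    rw [dotProduct, dotProduct] at this
    rw [this, sub_self]

lemma mapC_mul {α β γ : Type*} [Fintype β] (M : Matrix α β ℝ) (N : Matrix β γ ℝ) :
    ((M * N).map (fun t : ℝ => (t : ℂ))) =
      M.map (fun t : ℝ => (t : ℂ)) * N.map (fun t : ℝ => (t : ℂ)) := by
  ext i j; simp [Matrix.mul_apply]

lemma mapC_one {α : Type*} [Fintype α] [DecidableEq α] :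
    ((1 : Matrix α α ℝ).map (fun t : ℝ => (t : ℂ))) = 1 := by
  ext i j; simp [Matrix.one_apply, apply_ite (fun t : ℝ => (t : ℂ))]

lemma mapC_zero {p q : ℕ} : ((0 : Matrix (Fin p) (Fin q) ℝ).map (fun t : ℝ => (t : ℂ))) = 0 := by
  ext i j; simp

lemma mapC_neg {p q : ℕ} (M : Matrix (Fin p) (Fin q) ℝ) :
    ((-M).map (fun t : ℝ => (t : ℂ))) = -(M.map (fun t : ℝ => (t : ℂ))) := by
  ext i j; simp

lemma mapC_mulVec_star {p q : ℕ} (M : Matrix (Fin p) (Fin q) ℝ) (w : Fin q → ℂ) :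
    (M.map (fun t : ℝ => (t : ℂ))) *ᵥ (star w) = star ((M.map (fun t : ℝ => (t : ℂ))) *ᵥ w) := by
  funext i
  simp [mulVec, dotProduct, Complex.star_def, map_sum, Complex.conj_ofReal]

lemma conjT_eq_transpose {p q : ℕ} (M : Matrix (Fin p) (Fin q) ℝ) : Mᴴ = Mᵀ := by
  ext i j; simp [conjTranspose_apply]

lemma mapC_inj_of_posdef {k : ℕ} {M : Matrix (Fin k) (Fin k) ℝ} (hM : M.PosDef)
    {w : Fin k → ℂ} (h : (M.map (fun t : ℝ => (t : ℂ))) *ᵥ w = 0) : w = 0 := by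
  have h1 : (((M⁻¹).map (fun t : ℝ => (t : ℂ)) * M.map (fun t : ℝ => (t : ℂ)))) *ᵥ w = 0 := by
    rw [← mulVec_mulVec, h, mulVec_zero]
  rwa [← mapC_mul, nonsing_inv_mul _ (isUnit_iff_ne_zero.mpr hM.det_pos.ne'), mapC_one,
    one_mulVec] at h1

lemma fullrank_injC {p q : ℕ} (M : Matrix (Fin p) (Fin q) ℝ) (h : M.rank = q)
    {w : Fin q → ℂ} (hw : (M.map (fun t : ℝ => (t : ℂ))) *ᵥ w = 0) : w = 0 := by
  have hre : M *ᵥ (fun j => (w j).re) = 0 := by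
    funext i
    have := congrFun hw i
    rw [← re_mulVec, this]; rfl
  have him : M *ᵥ (fun j => (w j).im) = 0 := by
    funext i
    have := congrFun hw i
    rw [← im_mulVec, this]; rfl
  have h1 := fullrank_inj M h hre
  have h2 := fullrank_inj M h him
  funext i; apply Complex.ext
  · simpa using congrFun h1 i
  · simpa using congrFun h2 i

lemma blk3_map_mulVec {n m l : ℕ} (M11 : Matrix (Fin n) (Fin n) ℝ) (M12 : Matrix (Fin n) (Fin m) ℝ)
    (M13 : Matrix (Fin n) (Fin l) ℝ) (M21 : Matrix (Fin m) (Fin n) ℝ)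
    (M22 : Matrix (Fin m) (Fin m) ℝ) (M23 : Matrix (Fin m) (Fin l) ℝ)
    (M31 : Matrix (Fin l) (Fin n) ℝ) (M32 : Matrix (Fin l) (Fin m) ℝ)
    (M33 : Matrix (Fin l) (Fin l) ℝ) (x : Fin n → ℂ) (y : Fin m → ℂ) (z : Fin l → ℂ) :
    ((blk3 M11 M12 M13 M21 M22 M23 M31 M32 M33).map (fun t : ℝ => (t : ℂ))) *ᵥ
        Sum.elim x (Sum.elim y z)
      = Sum.elim
          (M11.map (fun t : ℝ => (t:ℂ)) *ᵥ x + (M12.map (fun t : ℝ => (t:ℂ)) *ᵥ y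
            + M13.map (fun t : ℝ => (t:ℂ)) *ᵥ z))
          (Sum.elim
            (M21.map (fun t : ℝ => (t:ℂ)) *ᵥ x + (M22.map (fun t : ℝ => (t:ℂ)) *ᵥ y
              + M23.map (fun t : ℝ => (t:ℂ)) *ᵥ z))
            (M31.map (fun t : ℝ => (t:ℂ)) *ᵥ x + (M32.map (fun t : ℝ => (t:ℂ)) *ᵥ y
              + M33.map (fun t : ℝ => (t:ℂ)) *ᵥ z))) := by
  funext i
  rcases i with i | i
  · simp [blk3, mulVec, dotProduct, Fintype.sum_sum_type, fromBlocks, fromCols, fromCols_apply_inl, fromCols_apply_inr,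
      Finset.sum_add_distrib]
  · rcases i with i | i <;>
    simp [blk3, mulVec, dotProduct, Fintype.sum_sum_type, fromBlocks, fromRows_apply_inl, fromRows_apply_inr,
      Finset.sum_add_distrib]

theorem stmt4 {n m l : ℕ} (A : Matrix (Fin n) (Fin n) ℝ) (B : Matrix (Fin m) (Fin n) ℝ)
    (S : Matrix (Fin m) (Fin m) ℝ) (C : Matrix (Fin l) (Fin m) ℝ)
    (hA : A.PosDef) (hS : S.PosDef) (hB : B.rank = m) (hC : C.rank = l)
    (h2 : ((2 : ℝ) • S - B * A⁻¹ * Bᵀ).PosDef) :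
    ∀ μ : ℂ, IsEig ((blk3 A Bᵀ 0 0 S (-Cᵀ) 0 C 0)⁻¹ * blk3 0 0 0 B S 0 0 0 0) μ → ‖μ‖ < 1 := by
  intro μ hμ
  obtain ⟨v, hv0, h⟩ := hμ
  classical
  set P := blk3 A Bᵀ 0 0 S (-Cᵀ) 0 C 0 with hPdef
  set R := blk3 0 0 0 B S 0 0 0 0 with hRdef
  -- P is invertible
  have hKdet : (fromBlocks S (-Cᵀ) C (0 : Matrix (Fin l) (Fin l) ℝ)).det ≠ 0 := by
    intro hdet
    obtain ⟨w, hw0, hw⟩ := (Matrix.exists_mulVec_eq_zero_iff).mpr hdet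
    set yv : Fin m → ℝ := fun i => w (Sum.inl i) with hyv
    set zv : Fin l → ℝ := fun i => w (Sum.inr i) with hzv
    have hw' : w = Sum.elim yv zv := by funext i; rcases i with i | i <;> rfl
    rw [hw', fromBlocks_mulVec] at hw
    have h1 : S *ᵥ yv + (-Cᵀ) *ᵥ zv = 0 := by funext i; simpa using congrFun hw (Sum.inl i)
    have h2' : C *ᵥ yv = 0 := by funext i; simpa using congrFun hw (Sum.inr i)
    have hSy : S *ᵥ yv = Cᵀ *ᵥ zv := by
      have := h1; rw [neg_mulVec, add_neg_eq_zero] at this; exact this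
    have hy : yv = 0 := by
      by_contra hy0
      have hpos : 0 < yv ⬝ᵥ (S *ᵥ yv) := by simpa using hS.dotProduct_mulVec_pos hy0
      rw [hSy, dotProduct_mulVec, vecMul_transpose, h2', zero_dotProduct] at hpos
      exact lt_irrefl _ hpos
    have hz : zv = 0 := by
      refine fullrank_inj Cᵀ (by rw [rank_transpose]; exact hC) ?_
      rw [← hSy, hy, mulVec_zero]
    exact hw0 (by rw [hw', hy, hz]; funext i; rcases i with i | i <;> simp)
  have hPdet' : IsUnit P.det := by
    have hfr : (fromRows (0 : Matrix (Fin m) (Fin n) ℝ) (0 : Matrix (Fin l) (Fin n) ℝ)) = 0 := by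
      ext i j; rcases i with i | i <;> simp [fromRows_apply_inl, fromRows_apply_inr]
    have hPd : P.det = A.det * (fromBlocks S (-Cᵀ) C (0 : Matrix (Fin l) (Fin l) ℝ)).det := by
      rw [hPdef]; unfold blk3; rw [hfr, det_fromBlocks_zero₂₁]
    rw [hPd]
    exact isUnit_iff_ne_zero.mpr (mul_ne_zero hA.det_pos.ne' hKdet)
  -- pass to R v = μ P v
  have hPmul : (P.map (fun t : ℝ => (t : ℂ))) * ((P⁻¹ * R).map (fun t : ℝ => (t : ℂ)))
      = R.map (fun t : ℝ => (t : ℂ)) := by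
    rw [← mapC_mul, ← mul_assoc, mul_nonsing_inv _ hPdet', one_mul]
  have h2c : (R.map (fun t : ℝ => (t : ℂ))) *ᵥ v
      = μ • ((P.map (fun t : ℝ => (t : ℂ))) *ᵥ v) := by
    have hcongr := congrArg (fun w => (P.map (fun t : ℝ => (t : ℂ))) *ᵥ w) h
    simpa [mulVec_mulVec, hPmul, mulVec_smul] using hcongr
  -- decompose v
  set x : Fin n → ℂ := fun i => v (Sum.inl i) with hxdef
  set y : Fin m → ℂ := fun i => v (Sum.inr (Sum.inl i)) with hydef
  set z : Fin l → ℂ := fun i => v (Sum.inr (Sum.inr i)) with hzdef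
  have hv : v = Sum.elim x (Sum.elim y z) := by
    funext i; rcases i with i | i
    · rfl
    · rcases i with i | i <;> rfl
  rw [hv, hPdef, hRdef, blk3_map_mulVec, blk3_map_mulVec] at h2c
  have E1 : (0 : Fin n → ℂ) = μ • ((A.map (fun t : ℝ => (t : ℂ))) *ᵥ x
      + (Bᵀ.map (fun t : ℝ => (t : ℂ))) *ᵥ y) := by
    funext i
    have := congrFun h2c (Sum.inl i)
    simpa [mapC_zero] using this
  have E2 : (B.map (fun t : ℝ => (t : ℂ))) *ᵥ x + (S.map (fun t : ℝ => (t : ℂ))) *ᵥ y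
      = μ • ((S.map (fun t : ℝ => (t : ℂ))) *ᵥ y - (Cᵀ.map (fun t : ℝ => (t : ℂ))) *ᵥ z) := by
    funext i
    have := congrFun h2c (Sum.inr (Sum.inl i))
    simpa [mapC_zero, mapC_neg, neg_mulVec, sub_eq_add_neg] using this
  have E3 : (0 : Fin l → ℂ) = μ • ((C.map (fun t : ℝ => (t : ℂ))) *ᵥ y) := by
    funext i
    have := congrFun h2c (Sum.inr (Sum.inr i))
    simpa [mapC_zero] using this
  -- trivial case
  rcases eq_or_ne μ 0 with hμ0 | hμ0
  · rw [hμ0]; norm_num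
  -- nontrivial case
  have hE1 : (A.map (fun t : ℝ => (t : ℂ))) *ᵥ x + (Bᵀ.map (fun t : ℝ => (t : ℂ))) *ᵥ y = 0 :=
    ((smul_eq_zero.mp E1.symm).resolve_left hμ0)
  have hE3 : (C.map (fun t : ℝ => (t : ℂ))) *ᵥ y = 0 :=
    ((smul_eq_zero.mp E3.symm).resolve_left hμ0)
  -- y ≠ 0
  have hy0 : y ≠ 0 := by
    intro hy0
    have hBty : (Bᵀ.map (fun t : ℝ => (t : ℂ))) *ᵥ y = 0 := by rw [hy0, mulVec_zero]
    have hAx : (A.map (fun t : ℝ => (t : ℂ))) *ᵥ x = 0 := by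
      have := hE1; rwa [hBty, add_zero] at this
    have hx0 : x = 0 := mapC_inj_of_posdef hA hAx
    have hCz : (Cᵀ.map (fun t : ℝ => (t : ℂ))) *ᵥ z = 0 := by
      have hE2' := E2
      rw [hx0, hy0, mulVec_zero, mulVec_zero, add_zero] at hE2'
      have := (smul_eq_zero.mp hE2'.symm).resolve_left hμ0
      rwa [zero_sub, neg_eq_zero] at this
    have hz0 : z = 0 := fullrank_injC Cᵀ (by rw [rank_transpose]; exact hC) hCz
    exact hv0 (by rw [hv, hx0, hy0, hz0]; funext i; rcases i with i | i
                  · simp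
                  · rcases i with i | i <;> simp)
  -- symmetric matrices
  have hsymmS : Sᵀ = S := by have h' : Sᴴ = S := hS.1; rwa [conjT_eq_transpose] at h'
  have hsymmA : Aᵀ = A := by have h' : Aᴴ = A := hA.1; rwa [conjT_eq_transpose] at h'
  have hAinvT : (A⁻¹)ᵀ = A⁻¹ := by rw [transpose_nonsing_inv, hsymmA]
  have hsymmM : (B * A⁻¹ * Bᵀ)ᵀ = B * A⁻¹ * Bᵀ := by
    rw [transpose_mul, transpose_mul, transpose_transpose, hAinvT]
    exact (Matrix.mul_assoc B A⁻¹ Bᵀ).symm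
  -- express B x in terms of y
  have hAx : (A.map (fun t : ℝ => (t : ℂ))) *ᵥ x = -((Bᵀ.map (fun t : ℝ => (t : ℂ))) *ᵥ y) :=
    eq_neg_of_add_eq_zero_left hE1
  have hxval : x = -(((A⁻¹).map (fun t : ℝ => (t : ℂ))) *ᵥ
      ((Bᵀ.map (fun t : ℝ => (t : ℂ))) *ᵥ y)) := by
    have h1 : ((A⁻¹).map (fun t : ℝ => (t : ℂ))) *ᵥ ((A.map (fun t : ℝ => (t : ℂ))) *ᵥ x)
        = x := by
      rw [mulVec_mulVec, ← mapC_mul, nonsing_inv_mul _ (isUnit_iff_ne_zero.mpr hA.det_pos.ne'),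
        mapC_one, one_mulVec]
    rw [← h1, hAx, mulVec_neg]
  have hBx : (B.map (fun t : ℝ => (t : ℂ))) *ᵥ x
      = -(((B * A⁻¹ * Bᵀ).map (fun t : ℝ => (t : ℂ))) *ᵥ y) := by
    rw [hxval, mulVec_neg, mulVec_mulVec, mulVec_mulVec, mapC_mul, mapC_mul]
  -- quadratic forms
  set u : Fin m → ℝ := fun i => (y i).re with hudef
  set t : Fin m → ℝ := fun i => (y i).im with htdef
  set s₀ : ℝ := u ⬝ᵥ (S *ᵥ u) + t ⬝ᵥ (S *ᵥ t) with hs₀def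
  set a₀ : ℝ := u ⬝ᵥ ((B * A⁻¹ * Bᵀ) *ᵥ u) + t ⬝ᵥ ((B * A⁻¹ * Bᵀ) *ᵥ t) with ha₀def
  have hsy : star y ⬝ᵥ ((S.map (fun t : ℝ => (t : ℂ))) *ᵥ y) = (s₀ : ℂ) := by
    rw [quad_map_eq S hsymmS y]
  have hay : star y ⬝ᵥ (((B * A⁻¹ * Bᵀ).map (fun t : ℝ => (t : ℂ))) *ᵥ y) = (a₀ : ℂ) := by
    rw [quad_map_eq _ hsymmM y]
  have hCzdot : star y ⬝ᵥ ((Cᵀ.map (fun t : ℝ => (t : ℂ))) *ᵥ z) = 0 := by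
    rw [dotProduct_mulVec]
    have hT : (Cᵀ.map (fun t : ℝ => (t : ℂ))) = (C.map (fun t : ℝ => (t : ℂ)))ᵀ := by
      ext i j; simp
    have : star y ᵥ* (Cᵀ.map (fun t : ℝ => (t : ℂ)))
        = star ((C.map (fun t : ℝ => (t : ℂ))) *ᵥ y) := by
      rw [hT, vecMul_transpose, mapC_mulVec_star]
    rw [this, hE3, star_zero, zero_dotProduct]
  -- positivity facts
  have hut : u ≠ 0 ∨ t ≠ 0 := by
    by_contra hcon
    push_neg at hcon
    apply hy0
    funext i; apply Complex.ext
    · simpa [hudef] using congrFun hcon.1 i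
    · simpa [htdef] using congrFun hcon.2 i
  have hqM : ∀ w : Fin m → ℝ,
      w ⬝ᵥ ((B * A⁻¹ * Bᵀ) *ᵥ w) = (Bᵀ *ᵥ w) ⬝ᵥ (A⁻¹ *ᵥ (Bᵀ *ᵥ w)) := by
    intro w
    rw [← mulVec_mulVec, ← mulVec_mulVec, dotProduct_mulVec, ← mulVec_transpose]
  have hMnn : ∀ w : Fin m → ℝ, 0 ≤ w ⬝ᵥ ((B * A⁻¹ * Bᵀ) *ᵥ w) := by
    intro w; rw [hqM]
    simpa using hA.inv.posSemidef.dotProduct_mulVec_nonneg (Bᵀ *ᵥ w)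
  have hMpos : ∀ w : Fin m → ℝ, w ≠ 0 → 0 < w ⬝ᵥ ((B * A⁻¹ * Bᵀ) *ᵥ w) := by
    intro w hw; rw [hqM]
    have hBtw : Bᵀ *ᵥ w ≠ 0 :=
      fun hbz => hw (fullrank_inj Bᵀ (by rw [rank_transpose]; exact hB) hbz)
    simpa using hA.inv.dotProduct_mulVec_pos hBtw
  have hSnn : ∀ w : Fin m → ℝ, 0 ≤ w ⬝ᵥ (S *ᵥ w) := fun w => by simpa using hS.posSemidef.dotProduct_mulVec_nonneg w
  have hSpos : ∀ w : Fin m → ℝ, w ≠ 0 → 0 < w ⬝ᵥ (S *ᵥ w) := fun w hw => by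
    simpa using hS.dotProduct_mulVec_pos hw
  have hq2 : ∀ w : Fin m → ℝ, w ⬝ᵥ (((2 : ℝ) • S - B * A⁻¹ * Bᵀ) *ᵥ w)
      = 2 * (w ⬝ᵥ (S *ᵥ w)) - w ⬝ᵥ ((B * A⁻¹ * Bᵀ) *ᵥ w) := by
    intro w
    rw [sub_mulVec, dotProduct_sub, smul_mulVec, dotProduct_smul, smul_eq_mul]
  have h2nn : ∀ w : Fin m → ℝ,
      0 ≤ 2 * (w ⬝ᵥ (S *ᵥ w)) - w ⬝ᵥ ((B * A⁻¹ * Bᵀ) *ᵥ w) := by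
    intro w
    rw [← hq2]
    simpa using h2.posSemidef.dotProduct_mulVec_nonneg w
  have h2pos : ∀ w : Fin m → ℝ, w ≠ 0 →
      0 < 2 * (w ⬝ᵥ (S *ᵥ w)) - w ⬝ᵥ ((B * A⁻¹ * Bᵀ) *ᵥ w) := by
    intro w hw
    rw [← hq2]
    simpa using h2.dotProduct_mulVec_pos hw
  have hs₀pos : 0 < s₀ := by
    rcases hut with hu | ht
    · exact add_pos_of_pos_of_nonneg (hSpos u hu) (hSnn t)
    · exact add_pos_of_nonneg_of_pos (hSnn u) (hSpos t ht)
  have ha₀pos : 0 < a₀ := by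
    rcases hut with hu | ht
    · exact add_pos_of_pos_of_nonneg (hMpos u hu) (hMnn t)
    · exact add_pos_of_nonneg_of_pos (hMnn u) (hMpos t ht)
  have ha₀lt : a₀ < 2 * s₀ := by
    rcases hut with hu | ht
    · have := h2pos u hu; have := h2nn t; rw [hs₀def, ha₀def]; linarith
    · have := h2pos t ht; have := h2nn u; rw [hs₀def, ha₀def]; linarith
  -- the key scalar equation
  have key := congrArg (fun w => star y ⬝ᵥ w) E2
  simp only [dotProduct_add, dotProduct_smul, dotProduct_sub, hBx, dotProduct_neg,
    hsy, hay, hCzdot, smul_eq_mul, sub_zero] at key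
  -- key : -(a₀ : ℂ) + s₀ = μ * s₀
  have hs0C : (s₀ : ℂ) ≠ 0 := by exact_mod_cast hs₀pos.ne'
  have hμval : μ = (((s₀ - a₀) / s₀ : ℝ) : ℂ) := by
    push_cast
    field_simp
    linear_combination -key
  rw [hμval, Complex.norm_real, Real.norm_eq_abs, abs_div, abs_of_pos hs₀pos,
    div_lt_one hs₀pos, abs_lt]
  constructor <;> linarith
end
end

section
/- Let A be Hermitian negative definite and B Hermitian positive semidefinite, both n×n. Then all eigenvalues of AB are real and satisfy λ_min(A)λ_min(B) ≤ λ_max(AB) ≤ λ_max(A)λ_min(B) and λ_min(A)λ_max(B) ≤ λ_min(AB) ≤ λ_max(A)λ_max(B). -/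
open Matrix

noncomputable section

/-!
Let `S` be the positive square root of `-A`. Since `A * B * S = S * -(S * B * S)`, the eigenvalues
of `A * B` are the negatives of those of the Hermitian matrix `M = S * B * S`; in particular they
are real. The Rayleigh quotient of `M` factors as `R_M x = R_B (S x) * R_{-A} x`, and each factor
lies between the extreme eigenvalues of `B`, resp. `-A`. Evaluating at eigenvectors of `M` bounds
`λ_min(M)` from below and `λ_max(M)` from above; evaluating at `S⁻¹ y`, for `y` an eigenvector of
`B` to `λ_min(B)` or `λ_max(B)`, gives the two remaining bounds.
-/

open scoped MatrixOrder ComplexOrder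

namespace Matrix

section Field

variable {n K : Type*} [Fintype n] [DecidableEq n] [Field K]

lemma exists_mulVec_eq_smul_of_mul_eq_mul {X Y S : Matrix n n K} (hS : IsUnit S)
    (h : X * S = S * Y) {μ : K} (hY : ∃ u, u ≠ 0 ∧ Y *ᵥ u = μ • u) :
    ∃ v, v ≠ 0 ∧ X *ᵥ v = μ • v := by
  obtain ⟨u, hu, hYu⟩ := hY
  refine ⟨S *ᵥ u, fun h0 => hu (mulVec_injective_iff_isUnit.mpr hS ?_), ?_⟩
  · rw [h0, mulVec_zero]
  · rw [mulVec_mulVec, h, ← mulVec_mulVec, hYu, mulVec_smul]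

lemma exists_mulVec_eq_smul_iff_of_mul_eq_mul {X Y S : Matrix n n K} (hS : IsUnit S)
    (h : X * S = S * Y) (μ : K) :
    (∃ v, v ≠ 0 ∧ X *ᵥ v = μ • v) ↔ ∃ u, u ≠ 0 ∧ Y *ᵥ u = μ • u := by
  have hdet := (isUnit_iff_isUnit_det S).mp hS
  have h' : Y * S⁻¹ = S⁻¹ * X := by
    calc Y * S⁻¹ = S⁻¹ * (S * Y) * S⁻¹ := by rw [nonsing_inv_mul_cancel_left _ _ hdet]
      _ = S⁻¹ * X := by rw [← h, Matrix.mul_assoc, mul_nonsing_inv_cancel_right _ _ hdet]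
  exact ⟨exists_mulVec_eq_smul_of_mul_eq_mul (isUnit_nonsing_inv_iff.mpr hS) h',
    exists_mulVec_eq_smul_of_mul_eq_mul hS h⟩

lemma exists_mul_mulVec_eq_smul_iff {A B S : Matrix n n K} (hSu : IsUnit S) (hSS : S * S = -A)
    (μ : K) :
    (∃ v, v ≠ 0 ∧ (A * B) *ᵥ v = μ • v) ↔ ∃ u, u ≠ 0 ∧ (S * B * S) *ᵥ u = (-μ) • u := by
  have hsim : A * B * S = S * -(S * B * S) := by
    rw [← neg_neg A, ← hSS]
    noncomm_ring
  rw [exists_mulVec_eq_smul_iff_of_mul_eq_mul hSu hsim]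
  simp only [neg_mulVec, neg_smul, neg_eq_iff_eq_neg]

end Field

section RCLike

variable {n 𝕜 : Type*} [Fintype n] [RCLike 𝕜]

/-- At `x = 0` this is the junk value `0 / 0 = 0`, so `rayleighQuotient_conj` needs no
nonvanishing hypothesis. -/
noncomputable def rayleighQuotient (H : Matrix n n 𝕜) (x : n → 𝕜) : ℝ :=
  RCLike.re (star x ⬝ᵥ H *ᵥ x) / RCLike.re (star x ⬝ᵥ x)

lemma re_star_dotProduct_self_pos {x : n → 𝕜} (hx : x ≠ 0) : 0 < RCLike.re (star x ⬝ᵥ x) :=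
  (RCLike.pos_iff.mp (dotProduct_star_self_pos_iff.mpr hx)).1

lemma re_star_dotProduct_mulVec_le_of_le {H K : Matrix n n 𝕜} (h : H ≤ K) (x : n → 𝕜) :
    RCLike.re (star x ⬝ᵥ H *ᵥ x) ≤ RCLike.re (star x ⬝ᵥ K *ᵥ x) := by
  have := RCLike.nonneg_iff.mp ((le_iff.mp h).dotProduct_mulVec_nonneg x)
  simpa [sub_mulVec, dotProduct_sub] using this.1

lemma rayleighQuotient_eq_of_mulVec_eq_smul {H : Matrix n n 𝕜} {x : n → 𝕜} {t : ℝ} (hx : x ≠ 0)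
    (h : H *ᵥ x = t • x) : H.rayleighQuotient x = t := by
  rw [rayleighQuotient, h, dotProduct_smul, RCLike.smul_re, mul_div_assoc,
    div_self (re_star_dotProduct_self_pos hx).ne', mul_one]

lemma PosSemidef.rayleighQuotient_nonneg {H : Matrix n n 𝕜} (hH : H.PosSemidef) (x : n → 𝕜) :
    0 ≤ H.rayleighQuotient x :=
  div_nonneg (hH.re_dotProduct_nonneg x) (RCLike.nonneg_iff.mp (dotProduct_star_self_nonneg x)).1

lemma rayleighQuotient_neg (H : Matrix n n 𝕜) (x : n → 𝕜) :
    (-H).rayleighQuotient x = -H.rayleighQuotient x := by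
  simp [rayleighQuotient, neg_mulVec, neg_div]

lemma rayleighQuotient_conj {S : Matrix n n 𝕜} (hS : S.IsHermitian) (B : Matrix n n 𝕜)
    (x : n → 𝕜) :
    (S * B * S).rayleighQuotient x =
      B.rayleighQuotient (S *ᵥ x) * (S * S).rayleighQuotient x := by
  have hconj : star x ⬝ᵥ (S * B * S) *ᵥ x = star (S *ᵥ x) ⬝ᵥ B *ᵥ (S *ᵥ x) := by
    rw [star_mulVec, hS.eq, ← mulVec_mulVec, ← mulVec_mulVec, dotProduct_mulVec]
  have hnorm : star x ⬝ᵥ (S * S) *ᵥ x = star (S *ᵥ x) ⬝ᵥ (S *ᵥ x) := by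
    rw [star_mulVec, hS.eq, ← mulVec_mulVec, dotProduct_mulVec]
  rw [rayleighQuotient, rayleighQuotient, rayleighQuotient, hconj, hnorm]
  by_cases hSx : S *ᵥ x = 0
  · simp [hSx]
  · rw [div_mul_div_cancel₀ (re_star_dotProduct_self_pos hSx).ne']

lemma rayleighQuotient_conj_eq_mul_neg {A S : Matrix n n 𝕜} (hS : S.IsHermitian)
    (hSS : S * S = -A) (B : Matrix n n 𝕜) (x : n → 𝕜) :
    (S * B * S).rayleighQuotient x = B.rayleighQuotient (S *ᵥ x) * -A.rayleighQuotient x := by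
  rw [rayleighQuotient_conj hS, hSS, rayleighQuotient_neg]

lemma rayleighQuotient_nonpos_of_mul_self_eq_neg {A S : Matrix n n 𝕜} (hS : S.IsHermitian)
    (hSS : S * S = -A) (x : n → 𝕜) : A.rayleighQuotient x ≤ 0 := by
  have hSS0 : (S * S).PosSemidef := by simpa [hS.eq] using posSemidef_conjTranspose_mul_self S
  simpa [hSS, rayleighQuotient_neg] using hSS0.rayleighQuotient_nonneg x

lemma IsHermitian.im_eq_zero_of_mulVec_eq_smul {H : Matrix n n 𝕜} (hH : H.IsHermitian)
    {x : n → 𝕜} {μ : 𝕜} (hx : x ≠ 0) (h : H *ᵥ x = μ • x) : RCLike.im μ = 0 := by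
  have him := hH.im_star_dotProduct_mulVec_self x
  have hpos := RCLike.pos_iff.mp (dotProduct_star_self_pos_iff.mpr hx)
  rw [h, dotProduct_smul, smul_eq_mul, RCLike.mul_im, hpos.2, mul_zero, zero_add] at him
  exact (mul_eq_zero.mp him).resolve_right hpos.1.ne'

variable [DecidableEq n]

lemma PosDef.exists_isHermitian_isUnit_mul_self_eq {P : Matrix n n 𝕜} (hP : P.PosDef) :
    ∃ S : Matrix n n 𝕜, S.IsHermitian ∧ IsUnit S ∧ S * S = P := by
  refine ⟨CFC.sqrt P, (nonneg_iff_posSemidef.mp (CFC.sqrt_nonneg P)).1, ?_,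
    CFC.sqrt_mul_sqrt_self P hP.posSemidef.nonneg⟩
  rw [CFC.isUnit_sqrt_iff P hP.posSemidef.nonneg]
  exact hP.isUnit

lemma mem_spectrum_of_mulVec_eq_smul {H : Matrix n n 𝕜} {x : n → 𝕜} {t : ℝ} (hx : x ≠ 0)
    (h : H *ᵥ x = (t : 𝕜) • x) : t ∈ spectrum ℝ H := by
  rw [spectrum.mem_iff, ← mulVec_injective_iff_isUnit]
  intro hinj
  refine hx (hinj ?_)
  rw [sub_mulVec, h, Algebra.algebraMap_eq_smul_one, smul_mulVec, one_mulVec, mulVec_zero,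
    RCLike.real_smul_eq_coe_smul (K := 𝕜), sub_self]

lemma IsHermitian.eigenvectorBasis_ne_zero {H : Matrix n n 𝕜} (hH : H.IsHermitian) (i : n) :
    ⇑(hH.eigenvectorBasis i) ≠ 0 := by
  simpa using hH.eigenvectorBasis.orthonormal.ne_zero i

lemma IsHermitian.setOf_exists_mulVec_eq_smul {H : Matrix n n 𝕜} (hH : H.IsHermitian) :
    {t : ℝ | ∃ x, x ≠ 0 ∧ H *ᵥ x = (t : 𝕜) • x} = Set.range hH.eigenvalues := by
  refine Set.Subset.antisymm (fun t ⟨x, hx, h⟩ => ?_) ?_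
  · rw [← hH.spectrum_real_eq_range_eigenvalues]
    exact mem_spectrum_of_mulVec_eq_smul hx h
  · rintro _ ⟨i, rfl⟩
    refine ⟨hH.eigenvectorBasis i, hH.eigenvectorBasis_ne_zero i, ?_⟩
    rw [hH.mulVec_eigenvectorBasis, RCLike.real_smul_eq_coe_smul (K := 𝕜)]

lemma IsHermitian.rayleighQuotient_le {H : Matrix n n 𝕜} (hH : H.IsHermitian) {x : n → 𝕜}
    (hx : x ≠ 0) : H.rayleighQuotient x ≤ ⨆ i, hH.eigenvalues i := by
  have hle : H ≤ algebraMap ℝ (Matrix n n 𝕜) (⨆ i, hH.eigenvalues i) := by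
    rw [le_algebraMap_iff_spectrum_le hH.isSelfAdjoint, hH.spectrum_real_eq_range_eigenvalues]
    rintro _ ⟨i, rfl⟩
    exact le_ciSup (Set.finite_range _).bddAbove i
  rw [rayleighQuotient, div_le_iff₀ (re_star_dotProduct_self_pos hx)]
  simpa [Algebra.algebraMap_eq_smul_one, smul_mulVec, RCLike.smul_re]
    using re_star_dotProduct_mulVec_le_of_le hle x

lemma IsHermitian.le_rayleighQuotient {H : Matrix n n 𝕜} (hH : H.IsHermitian) {x : n → 𝕜}
    (hx : x ≠ 0) : ⨅ i, hH.eigenvalues i ≤ H.rayleighQuotient x := by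
  have hle : algebraMap ℝ (Matrix n n 𝕜) (⨅ i, hH.eigenvalues i) ≤ H := by
    rw [algebraMap_le_iff_le_spectrum hH.isSelfAdjoint, hH.spectrum_real_eq_range_eigenvalues]
    rintro _ ⟨i, rfl⟩
    exact ciInf_le (Set.finite_range _).bddBelow i
  rw [rayleighQuotient, le_div_iff₀ (re_star_dotProduct_self_pos hx)]
  simpa [Algebra.algebraMap_eq_smul_one, smul_mulVec, RCLike.smul_re]
    using re_star_dotProduct_mulVec_le_of_le hle x

lemma IsHermitian.rayleighQuotient_eigenvectorBasis {H : Matrix n n 𝕜} (hH : H.IsHermitian)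
    (i : n) : H.rayleighQuotient ⇑(hH.eigenvectorBasis i) = hH.eigenvalues i :=
  rayleighQuotient_eq_of_mulVec_eq_smul (hH.eigenvectorBasis_ne_zero i)
    (hH.mulVec_eigenvectorBasis i)

section Conjugate

variable {A B S : Matrix n n 𝕜} (hA : A.IsHermitian) (hB : B.PosSemidef) (hS : S.IsHermitian)
  (hSu : IsUnit S) (hSS : S * S = -A) (hM : (S * B * S).IsHermitian)
include hA hB hS hSu hSS

lemma rayleighQuotient_conj_mem_Icc {x : n → 𝕜} (hx : x ≠ 0) :
    (S * B * S).rayleighQuotient x ∈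
      Set.Icc (-(⨆ i, hA.eigenvalues i) * ⨅ i, hB.1.eigenvalues i)
        (-(⨅ i, hA.eigenvalues i) * ⨆ i, hB.1.eigenvalues i) := by
  have : Nonempty n := ⟨(Function.ne_iff.mp hx).choose⟩
  have hSx : S *ᵥ x ≠ 0 := fun h0 =>
    hx (mulVec_injective_iff_isUnit.mpr hSu (by rw [h0, mulVec_zero]))
  have hRA := rayleighQuotient_nonpos_of_mul_self_eq_neg hS hSS x
  rw [rayleighQuotient_conj_eq_mul_neg hS hSS B]
  have hb0 : 0 ≤ ⨅ i, hB.1.eigenvalues i := le_ciInf hB.eigenvalues_nonneg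
  have := hB.1.le_rayleighQuotient hSx
  have := hB.1.rayleighQuotient_le hSx
  have := hA.le_rayleighQuotient hx
  have := hA.rayleighQuotient_le hx
  constructor <;> nlinarith

lemma iInf_eigenvalues_conj_le_and_le_iSup (k : n) :
    ⨅ i, hM.eigenvalues i ≤ -(⨅ i, hA.eigenvalues i) * hB.1.eigenvalues k ∧
      -(⨆ i, hA.eigenvalues i) * hB.1.eigenvalues k ≤ ⨆ i, hM.eigenvalues i := by
  set y := ⇑(hB.1.eigenvectorBasis k)
  have hSx : S *ᵥ (S⁻¹ *ᵥ y) = y := by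
    rw [mulVec_mulVec, mul_nonsing_inv _ ((isUnit_iff_isUnit_det S).mp hSu), one_mulVec]
  have hy : y ≠ 0 := hB.1.eigenvectorBasis_ne_zero k
  have hx : S⁻¹ *ᵥ y ≠ 0 := fun h0 => hy (by rw [← hSx, h0, mulVec_zero])
  have hRA := rayleighQuotient_nonpos_of_mul_self_eq_neg hS hSS (S⁻¹ *ᵥ y)
  have hR := rayleighQuotient_conj_eq_mul_neg hS hSS B (S⁻¹ *ᵥ y)
  rw [hSx, hB.1.rayleighQuotient_eigenvectorBasis] at hR
  have := hB.eigenvalues_nonneg k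
  have := hM.le_rayleighQuotient hx
  have := hM.rayleighQuotient_le hx
  have := hA.le_rayleighQuotient hx
  have := hA.rayleighQuotient_le hx
  constructor <;> nlinarith

include hM in
lemma neg_iInf_eigenvalues_conj_mem_Icc [Nonempty n] :
    -(⨅ i, hM.eigenvalues i) ∈ Set.Icc ((⨅ i, hA.eigenvalues i) * ⨅ i, hB.1.eigenvalues i)
      ((⨆ i, hA.eigenvalues i) * ⨅ i, hB.1.eigenvalues i) := by
  obtain ⟨k, hk⟩ := exists_eq_ciInf_of_finite (f := hB.1.eigenvalues)
  have hupper := (iInf_eigenvalues_conj_le_and_le_iSup hA hB hS hSu hSS hM k).1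
  have hlower :
      -(⨆ i, hA.eigenvalues i) * (⨅ i, hB.1.eigenvalues i) ≤ ⨅ i, hM.eigenvalues i :=
    le_ciInf fun i => by
      simpa [hM.rayleighQuotient_eigenvectorBasis] using
        (rayleighQuotient_conj_mem_Icc hA hB hS hSu hSS (hM.eigenvectorBasis_ne_zero i)).1
  rw [hk] at hupper
  constructor <;> linarith

include hM in
lemma neg_iSup_eigenvalues_conj_mem_Icc [Nonempty n] :
    -(⨆ i, hM.eigenvalues i) ∈ Set.Icc ((⨅ i, hA.eigenvalues i) * ⨆ i, hB.1.eigenvalues i)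
      ((⨆ i, hA.eigenvalues i) * ⨆ i, hB.1.eigenvalues i) := by
  obtain ⟨k, hk⟩ := exists_eq_ciSup_of_finite (f := hB.1.eigenvalues)
  have hlower := (iInf_eigenvalues_conj_le_and_le_iSup hA hB hS hSu hSS hM k).2
  have hupper :
      ⨆ i, hM.eigenvalues i ≤ -(⨅ i, hA.eigenvalues i) * (⨆ i, hB.1.eigenvalues i) :=
    ciSup_le fun i => by
      simpa [hM.rayleighQuotient_eigenvectorBasis] using
        (rayleighQuotient_conj_mem_Icc hA hB hS hSu hSS (hM.eigenvectorBasis_ne_zero i)).2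
  rw [hk] at hlower
  constructor <;> linarith

end Conjugate

end RCLike

end Matrix

open scoped ComplexOrder in
theorem stmt10 {n : ℕ} (A B : Matrix (Fin n) (Fin n) ℂ)
    (hA : A.IsHermitian) (hAneg : (-A).PosDef) (hB : B.PosSemidef) :
    (∀ μ : ℂ, (∃ v : Fin n → ℂ, v ≠ 0 ∧ (A * B) *ᵥ v = μ • v) → μ.im = 0) ∧
    ((⨅ i, hA.eigenvalues i) * (⨅ i, hB.1.eigenvalues i) ≤
        sSup {t : ℝ | ∃ v : Fin n → ℂ, v ≠ 0 ∧ (A * B) *ᵥ v = (t : ℂ) • v} ∧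
      sSup {t : ℝ | ∃ v : Fin n → ℂ, v ≠ 0 ∧ (A * B) *ᵥ v = (t : ℂ) • v} ≤
        (⨆ i, hA.eigenvalues i) * (⨅ i, hB.1.eigenvalues i)) ∧
    ((⨅ i, hA.eigenvalues i) * (⨆ i, hB.1.eigenvalues i) ≤
        sInf {t : ℝ | ∃ v : Fin n → ℂ, v ≠ 0 ∧ (A * B) *ᵥ v = (t : ℂ) • v} ∧
      sInf {t : ℝ | ∃ v : Fin n → ℂ, v ≠ 0 ∧ (A * B) *ᵥ v = (t : ℂ) • v} ≤
        (⨆ i, hA.eigenvalues i) * (⨆ i, hB.1.eigenvalues i)) := by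
  obtain ⟨S, hS, hSu, hSS⟩ := hAneg.exists_isHermitian_isUnit_mul_self_eq
  have hM : (S * B * S).IsHermitian := by
    simpa [hS.eq] using (hB.conjTranspose_mul_mul_same S).1
  have hspec : {t : ℝ | ∃ v : Fin n → ℂ, v ≠ 0 ∧ (A * B) *ᵥ v = (t : ℂ) • v} =
      -Set.range hM.eigenvalues := by
    ext t
    rw [Set.mem_neg, ← hM.setOf_exists_mulVec_eq_smul, Set.mem_ofPred_eq, Set.mem_ofPred_eq,
      exists_mul_mulVec_eq_smul_iff hSu hSS]
    norm_cast
  refine ⟨fun μ hμ => ?_, ?_⟩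
  · obtain ⟨u, hu, h⟩ := (exists_mul_mulVec_eq_smul_iff hSu hSS μ).mp hμ
    simpa using hM.im_eq_zero_of_mulVec_eq_smul hu h
  rw [hspec, Real.sSup_neg, Real.sInf_neg]
  rcases isEmpty_or_nonempty (Fin n) with hn | hn
  · simp [Set.range_eq_empty]
  exact ⟨neg_iInf_eigenvalues_conj_mem_Icc hA hB hS hSu hSS hM,
    neg_iSup_eigenvalues_conj_mem_Icc hA hB hS hSu hSS hM⟩
end
end

section
/- If S = B A⁻¹ Bᵀ (with A SPD and B, C full row rank), then (𝒫⁻¹ℬ - I)² = 0; consequently all eigenvalues of 𝒫⁻¹ℬ equal 1 and the minimal polynomial of 𝒫⁻¹ℬ has degree at most 2. -/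
open Matrix

noncomputable section

/-- Full-row-rank `B` times PosDef times `Bᵀ` is PosDef (real case). -/
lemma posDef_mul_mul_transpose {p q : ℕ} {M : Matrix (Fin q) (Fin q) ℝ} (hM : M.PosDef)
    {B : Matrix (Fin p) (Fin q) ℝ} (hB : B.rank = p) : (B * M * Bᵀ).PosDef := by
  have hsurj : Function.Surjective B.mulVecLin := by
    rw [← LinearMap.range_eq_top]
    apply Submodule.eq_top_of_finrank_eq
    rw [← Matrix.rank, hB]
    simp [Module.finrank_pi]
  have hinj : ∀ x : Fin p → ℝ, Bᵀ *ᵥ x = 0 → x = 0 := by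
    intro x hx
    obtain ⟨y, hy⟩ := hsurj x
    have h0 : x ⬝ᵥ x = 0 := by
      have : x ⬝ᵥ (B *ᵥ y) = (Bᵀ *ᵥ x) ⬝ᵥ y := by
        rw [Matrix.dotProduct_mulVec, Matrix.mulVec_transpose]
      rw [Matrix.mulVecLin_apply] at hy
      rw [hy, hx, zero_dotProduct] at this
      exact this
    ext i
    have := Finset.sum_eq_zero_iff_of_nonneg (fun j _ => mul_self_nonneg (x j)) |>.mp h0 i
      (Finset.mem_univ i)
    simpa [mul_self_eq_zero] using this
  refine Matrix.PosDef.of_dotProduct_mulVec_pos ?_ ?_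
  · have := (hM.posSemidef.mul_mul_conjTranspose_same B).isHermitian
    rwa [Matrix.conjTranspose_eq_transpose_of_trivial] at this
  · intro x hx
    have hBx : Bᵀ *ᵥ x ≠ 0 := fun h => hx (hinj x h)
    have := hM.dotProduct_mulVec_pos hBx
    have hstar : (star x : Fin p → ℝ) = x := by simp
    rw [hstar]
    calc x ⬝ᵥ ((B * M * Bᵀ) *ᵥ x) = x ⬝ᵥ (B *ᵥ (M *ᵥ (Bᵀ *ᵥ x))) := by
          rw [← Matrix.mulVec_mulVec, ← Matrix.mulVec_mulVec]
      _ = (Bᵀ *ᵥ x) ⬝ᵥ (M *ᵥ (Bᵀ *ᵥ x)) := by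
          rw [Matrix.dotProduct_mulVec, Matrix.mulVec_transpose]
      _ > 0 := by
          have hstar2 : (star (Bᵀ *ᵥ x) : Fin q → ℝ) = Bᵀ *ᵥ x := by simp
          rw [← hstar2]; exact this

theorem stmt15 {n m l : ℕ} (A : Matrix (Fin n) (Fin n) ℝ) (B : Matrix (Fin m) (Fin n) ℝ)
    (S : Matrix (Fin m) (Fin m) ℝ) (C : Matrix (Fin l) (Fin m) ℝ)
    (hA : A.PosDef) (hB : B.rank = m) (hC : C.rank = l) (hSdef : S = B * A⁻¹ * Bᵀ) :
    ((blk3 A Bᵀ 0 0 S (-Cᵀ) 0 C 0)⁻¹ * blk3 A Bᵀ 0 (-B) 0 (-Cᵀ) 0 C 0 - 1) ^ 2 = 0 ∧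
    (∀ μ : ℂ, IsEig ((blk3 A Bᵀ 0 0 S (-Cᵀ) 0 C 0)⁻¹ * blk3 A Bᵀ 0 (-B) 0 (-Cᵀ) 0 C 0) μ → μ = 1) ∧
    (minpoly ℝ ((blk3 A Bᵀ 0 0 S (-Cᵀ) 0 C 0)⁻¹ * blk3 A Bᵀ 0 (-B) 0 (-Cᵀ) 0 C 0)).degree ≤ 2 := by
  set P : Matrix (Fin n ⊕ (Fin m ⊕ Fin l)) (Fin n ⊕ (Fin m ⊕ Fin l)) ℝ :=
    blk3 A Bᵀ 0 0 S (-Cᵀ) 0 C 0 with hPdef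
  set Bc : Matrix (Fin n ⊕ (Fin m ⊕ Fin l)) (Fin n ⊕ (Fin m ⊕ Fin l)) ℝ :=
    blk3 A Bᵀ 0 (-B) 0 (-Cᵀ) 0 C 0 with hBcdef
  set Z : Matrix (Fin n ⊕ (Fin m ⊕ Fin l)) (Fin n ⊕ (Fin m ⊕ Fin l)) ℝ :=
    blk3 0 0 0 (-(B * A⁻¹)) 0 0 0 0 0 with hZdef
  have hS : S.PosDef := hSdef ▸ posDef_mul_mul_transpose hA.inv hB
  -- determinant of P is a unit
  have hPunit : IsUnit P.det := by
    have h2 : (fromBlocks S (-Cᵀ) C (0 : Matrix (Fin l) (Fin l) ℝ)).det ≠ 0 := by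
      haveI := hS.isUnit.invertible
      rw [Matrix.det_fromBlocks₁₁, Matrix.invOf_eq_nonsing_inv]
      have hCSC : (C * S⁻¹ * Cᵀ).PosDef := posDef_mul_mul_transpose hS.inv hC
      have hrw : (0 : Matrix (Fin l) (Fin l) ℝ) - C * S⁻¹ * -Cᵀ = C * S⁻¹ * Cᵀ := by
        rw [Matrix.mul_neg, sub_neg_eq_add, zero_add]
      rw [hrw]
      exact (mul_pos hS.det_pos hCSC.det_pos).ne'
    have hdet : P.det = A.det * (fromBlocks S (-Cᵀ) C (0 : Matrix (Fin l) (Fin l) ℝ)).det := by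
      rw [hPdef]; unfold blk3
      rw [fromRows_zero, Matrix.det_fromBlocks_zero₂₁]
    rw [hdet]
    exact (mul_ne_zero hA.det_pos.ne' h2).isUnit
  have hPinv : P * P⁻¹ = 1 := Matrix.mul_nonsing_inv P hPunit
  have hPinv' : P⁻¹ * P = 1 := Matrix.nonsing_inv_mul P hPunit
  -- key block identity
  have hAinv : A⁻¹ * A = 1 := Matrix.nonsing_inv_mul A hA.det_pos.ne'.isUnit
  have hBA : B * A⁻¹ * A = B := by rw [Matrix.mul_assoc, hAinv, Matrix.mul_one]
  have key : Z * P = Bc - P := by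
    rw [hZdef, hPdef, hBcdef]; unfold blk3
    simp only [fromBlocks_multiply, fromRows_mul, mul_fromCols,
      fromRows_mul_fromCols, fromCols_mul_fromRows, Matrix.zero_mul, Matrix.mul_zero,
      add_zero, zero_add, Matrix.neg_mul, Matrix.mul_neg, fromCols_zero, fromRows_zero,
      fromBlocks_zero, hBA, hAinv, ← hSdef]
    ext (i | j | k) (i' | j' | k') <;>
      simp [Matrix.fromBlocks, Matrix.fromRows, Matrix.fromCols, hBA, hAinv, Matrix.fromRows_apply_inl,
        Matrix.fromRows_apply_inr, Matrix.of_apply, Sum.elim_inl, Sum.elim_inr, Sum.elim]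
  have hZZ : Z * Z = 0 := by
    rw [hZdef]; unfold blk3
    simp only [fromBlocks_multiply, fromRows_mul, mul_fromCols,
      fromRows_mul_fromCols, fromCols_mul_fromRows, Matrix.zero_mul, Matrix.mul_zero,
      add_zero, zero_add, Matrix.neg_mul, Matrix.mul_neg, fromCols_zero, fromRows_zero,
      fromBlocks_zero]
  -- the nilpotency identity
  have hkey : P⁻¹ * Bc - 1 = P⁻¹ * (Z * P) := by
    rw [key, Matrix.mul_sub, hPinv']
  have hn : (P⁻¹ * Bc - 1) ^ 2 = 0 := by
    rw [hkey, pow_two]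
    have hassoc : P⁻¹ * (Z * P) * (P⁻¹ * (Z * P)) = P⁻¹ * (Z * (P * P⁻¹ * (Z * P))) := by
      simp only [mul_assoc]
    rw [hassoc, hPinv, one_mul, ← mul_assoc Z Z P, hZZ, Matrix.zero_mul, Matrix.mul_zero]
  refine ⟨hn, ?_, ?_⟩
  · -- eigenvalues
    rintro μ ⟨v, hv, hMv⟩
    set T : Matrix (Fin n ⊕ (Fin m ⊕ Fin l)) (Fin n ⊕ (Fin m ⊕ Fin l)) ℝ := P⁻¹ * Bc with hT
    have hmapc : T.map (fun x : ℝ => (x : ℂ)) = (algebraMap ℝ ℂ).mapMatrix T := by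
      rfl
    have hm : ((T.map (fun x : ℝ => (x : ℂ))) - 1) ^ 2 = 0 := by
      have := congrArg (algebraMap ℝ ℂ).mapMatrix hn
      rw [map_pow, map_sub, _root_.map_one, map_zero] at this
      rw [hmapc]
      exact this
    have h1 : ((T.map (fun x : ℝ => (x : ℂ))) - 1) *ᵥ v = (μ - 1) • v := by
      rw [Matrix.sub_mulVec, hMv, Matrix.one_mulVec, sub_smul, one_smul]
    have h2 : (((T.map (fun x : ℝ => (x : ℂ))) - 1) ^ 2) *ᵥ v = ((μ - 1) * (μ - 1)) • v := by
      rw [pow_two, ← Matrix.mulVec_mulVec, h1, Matrix.mulVec_smul, h1, smul_smul]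
    rw [hm, Matrix.zero_mulVec] at h2
    have h3 : (μ - 1) * (μ - 1) = 0 ∨ v = 0 := smul_eq_zero.mp h2.symm
    rcases h3 with h3 | h3
    · rcases mul_eq_zero.mp h3 with h4 | h4 <;> [skip; skip] <;>
        exact sub_eq_zero.mp h4
    · exact absurd h3 hv
  · -- minimal polynomial degree
    set T : Matrix (Fin n ⊕ (Fin m ⊕ Fin l)) (Fin n ⊕ (Fin m ⊕ Fin l)) ℝ := P⁻¹ * Bc with hT
    have hpnz : ((Polynomial.X - Polynomial.C 1 : Polynomial ℝ) ^ 2) ≠ 0 :=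
      pow_ne_zero 2 (Polynomial.X_sub_C_ne_zero 1)
    have hann : (Polynomial.aeval T) ((Polynomial.X - Polynomial.C 1 : Polynomial ℝ) ^ 2) = 0 := by
      rw [map_pow, map_sub, Polynomial.aeval_X, Polynomial.aeval_C, _root_.map_one]
      exact hn
    have hdeg : ((Polynomial.X - Polynomial.C 1 : Polynomial ℝ) ^ 2).degree = 2 := by
      rw [Polynomial.degree_pow, Polynomial.degree_X_sub_C]
      rfl
    calc (minpoly ℝ T).degree ≤ ((Polynomial.X - Polynomial.C 1 : Polynomial ℝ) ^ 2).degree :=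
          minpoly.degree_le_of_ne_zero ℝ T hpnz hann
      _ = 2 := hdeg
end
end

section
/- Let M ∈ ℝ^{m×n} with M Mᵀ = I_m and N ∈ ℝ^{l×m} with N Nᵀ = I_l. Define K as the 3×3 block matrix [[Mᵀ(I - NᵀN)M, Mᵀ(I - NᵀN), 0], [(NᵀN - I)M, NᵀN - I, 0], [NM, N, 0]]. Then K² = 0. -/
open Matrix

noncomputable section

theorem stmt17 {n m l : ℕ} (M : Matrix (Fin m) (Fin n) ℝ) (N : Matrix (Fin l) (Fin m) ℝ)
    (hM : M * Mᵀ = 1) (hN : N * Nᵀ = 1) :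
    blk3 (Mᵀ * (1 - Nᵀ * N) * M) (Mᵀ * (1 - Nᵀ * N)) 0
         ((Nᵀ * N - 1) * M) (Nᵀ * N - 1) 0
         (N * M) N 0 *
    blk3 (Mᵀ * (1 - Nᵀ * N) * M) (Mᵀ * (1 - Nᵀ * N)) 0
         ((Nᵀ * N - 1) * M) (Nᵀ * N - 1) 0
         (N * M) N 0 = 0 := by
  have hMM' : ∀ {b : Type} [Fintype b] (Y : Matrix (Fin m) b ℝ), M * (Mᵀ * Y) = Y := by
    intro b _ Y
    rw [← Matrix.mul_assoc, hM, Matrix.one_mul]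
  unfold blk3
  have hr : ∀ (A C : Matrix (Fin m) (Fin n) ℝ) (B D : Matrix (Fin l) (Fin n) ℝ),
      fromRows A B + fromRows C D = fromRows (A + C) (B + D) := by
    intro A C B D; ext i j; cases i <;> simp [fromRows_apply_inl, fromRows_apply_inr]
  have hc : ∀ (A C : Matrix (Fin n) (Fin m) ℝ) (B D : Matrix (Fin n) (Fin l) ℝ),
      fromCols A B + fromCols C D = fromCols (A + C) (B + D) := by
    intro A C B D; ext i j; cases j <;> simp [fromCols_apply_inl, fromCols_apply_inr]
  have hz : (1 - Nᵀ * N) + (Nᵀ * N - 1) = 0 := by abel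
  rw [fromBlocks_multiply, fromCols_mul_fromRows, fromRows_mul_fromCols,
    fromBlocks_mul_fromRows, fromCols_mul_fromBlocks, fromRows_mul, mul_fromCols,
    fromBlocks_multiply]
  simp only [Matrix.mul_assoc, hMM', hr, hc, fromBlocks_add, ← Matrix.mul_add,
    ← Matrix.add_mul, hz, Matrix.zero_mul, Matrix.mul_zero, add_zero, zero_add,
    fromRows_zero, fromCols_zero, fromBlocks_zero]
end
end
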